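/- Let Ω = (0,1)² be uniformly partitioned into N² congruent squares. For every piecewise-polynomial vector field v = (v₁, v₂) in the displacement space V_k(𝒯_h) there exists a symmetric tensor field τ = diag(τ₁₁, τ₂₂) ∈ H(div, Ω, 𝕊) with τ₁₁(x,y) = ∫₀^x v₁(t,y) dt and τ₂₂(x,y) = ∫₀^y v₂(x,t) dt, such that div τ = v and ‖τ‖²_{H(div,Ω)} ≤ (3/2) ‖v‖²_{L²(Ω)}. -/

import Mathlib

open intervalIntegral MvPolynomial

/-- Evaluation of a bivariate polynomial (variable `0` is `x`, variable `1` is `y`). -/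
noncomputable def ev2 (p : MvPolynomial (Fin 2) ℝ) (x y : ℝ) : ℝ :=
  MvPolynomial.eval ![x, y] p

/-- Open `i`-th subinterval of `(0,1)` for the uniform partition into `N` intervals. -/
def Ix (N i : ℕ) : Set ℝ := Set.Ioo ((i : ℝ) / N) ((i + 1 : ℝ) / N)

/-- Local displacement space `V_k(K) = (P_{k-1})² ⊕ span{(x^k,0),(0,y^k),(xy^{k-1},0),(0,x^{k-1}y)}`. -/
def memVk (k : ℕ) (q1 q2 : MvPolynomial (Fin 2) ℝ) : Prop :=
  ∃ p1 p2 : MvPolynomial (Fin 2) ℝ, ∃ a b c d : ℝ,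
    p1.totalDegree ≤ k - 1 ∧ p2.totalDegree ≤ k - 1 ∧
    q1 = p1 + MvPolynomial.C a * X 0 ^ k + MvPolynomial.C b * X 0 * X 1 ^ (k - 1) ∧
    q2 = p2 + MvPolynomial.C c * X 1 ^ k + MvPolynomial.C d * X 0 ^ (k - 1) * X 1

/-- Membership of `(v₁,v₂)` in the global displacement space `V_k(𝒯_h)` on the uniform
`N × N` mesh of the unit square. -/
def meshVk (k N : ℕ) (v1 v2 : ℝ → ℝ → ℝ) : Prop :=
  ∀ i j : ℕ, i < N → j < N → ∃ q1 q2 : MvPolynomial (Fin 2) ℝ, memVk k q1 q2 ∧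
    ∀ x y : ℝ, x ∈ Ix N i → y ∈ Ix N j → v1 x y = ev2 q1 x y ∧ v2 x y = ev2 q2 x y

/-!
Writing `τ₁₁(x,y) = ∫₀ˣ v₁(t,y) dt` and `τ₂₂(x,y) = ∫₀ʸ v₂(x,t) dt`, the identity `div τ = v` is the
fundamental theorem of calculus inside each open cell, where `v` is continuous. For the bound,
Cauchy–Schwarz gives `τ₁₁(x,y)² ≤ x ∫₀¹ v₁(t,y)² dt` and `τ₂₂(x,y)² ≤ y ∫₀¹ v₂(x,t)² dt`, and
`∫₀¹ x dx = 1/2` turns this into `‖τ‖² ≤ ½ ‖v‖²`. To have measurability and integrability at hand,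
`v` is replaced by a bounded measurable function agreeing with it off the mesh lines, a null set.
-/

open MeasureTheory Set Filter Function
open scoped Interval

theorem sq_setIntegral_le_measureReal_mul {α : Type*} [MeasurableSpace α] {μ : Measure α}
    {s : Set α} {f : α → ℝ} (hs : μ s ≠ ⊤) (hf : IntegrableOn f s μ)
    (hf2 : IntegrableOn (fun x => f x ^ 2) s μ) :
    (∫ x in s, f x ∂μ) ^ 2 ≤ μ.real s * ∫ x in s, f x ^ 2 ∂μ := by
  rcases eq_or_ne (μ s) 0 with h0 | h0
  · simp [Measure.restrict_eq_zero.2 h0]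
  have hm : 0 < μ.real s := ENNReal.toReal_pos h0 hs
  have jensen := (even_two.convexOn_pow (𝕜 := ℝ)).map_set_average_le
    (continuous_pow 2).continuousOn isClosed_univ h0 hs (by simp) hf hf2
  rw [setAverage_eq, setAverage_eq, smul_eq_mul, smul_eq_mul, mul_pow,
    measureReal_def] at jensen
  rw [measureReal_def] at hm ⊢
  field_simp at jensen
  nlinarith

theorem sq_intervalIntegral_le {f : ℝ → ℝ} {a b x : ℝ} (hax : a ≤ x) (hxb : x ≤ b)
    (hf : IntervalIntegrable f volume a b)
    (hf2 : IntervalIntegrable (fun t => f t ^ 2) volume a b) :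
    (∫ t in a..x, f t) ^ 2 ≤ (x - a) * ∫ t in a..b, f t ^ 2 := by
  have hsub : Ioc a x ⊆ Ioc a b := Ioc_subset_Ioc_right hxb
  rw [intervalIntegral.integral_of_le hax, intervalIntegral.integral_of_le (hax.trans hxb)]
  calc (∫ t in Ioc a x, f t) ^ 2 ≤ volume.real (Ioc a x) * ∫ t in Ioc a x, f t ^ 2 :=
        sq_setIntegral_le_measureReal_mul measure_Ioc_lt_top.ne
          ((hf.1).mono_set hsub) ((hf2.1).mono_set hsub)
    _ ≤ (x - a) * ∫ t in Ioc a b, f t ^ 2 := by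
        rw [Real.volume_real_Ioc_of_le hax]
        exact mul_le_mul_of_nonneg_left (setIntegral_mono_set hf2.1
          (ae_of_all _ fun t => sq_nonneg (f t)) hsub.eventuallyLE) (sub_nonneg.2 hax)

theorem intervalIntegral_mono_of_nonneg {f g : ℝ → ℝ} {a b : ℝ} (hab : a ≤ b)
    (hf : ∀ x ∈ Ioc a b, 0 ≤ f x) (hg : IntervalIntegrable g volume a b)
    (hfg : ∀ x ∈ Ioc a b, f x ≤ g x) : ∫ x in a..b, f x ≤ ∫ x in a..b, g x := by
  rw [intervalIntegral.integral_of_le hab, intervalIntegral.integral_of_le hab]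
  exact integral_mono_of_nonneg (ae_restrict_of_forall_mem measurableSet_Ioc hf) hg.1
    (ae_restrict_of_forall_mem measurableSet_Ioc hfg)

theorem Measurable.intervalIntegrable_of_abs_le {f : ℝ → ℝ} (hf : Measurable f) {M : ℝ}
    (hM : ∀ x, |f x| ≤ M) (a b : ℝ) : IntervalIntegrable f volume a b :=
  (intervalIntegrable_const (c := M)).mono_fun hf.aestronglyMeasurable
    (ae_of_all _ fun x => by simpa using (hM x).trans (le_abs_self M))

section BoundedMeasurable

variable {F : ℝ → ℝ → ℝ} {M : ℝ}

theorem abs_intervalIntegral_le_of_abs_le {f : ℝ → ℝ} (hM : ∀ t, |f t| ≤ M) {a b : ℝ}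
    (hab : a ≤ b) : |∫ t in a..b, f t| ≤ (b - a) * M := by
  simpa [abs_of_nonneg (sub_nonneg.2 hab), mul_comm] using
    intervalIntegral.norm_integral_le_of_norm_le_const (a := a) (b := b) (f := f) (C := M)
      (fun t _ => (Real.norm_eq_abs _).trans_le (hM t))

theorem intervalIntegrable_intervalIntegral_left (hF : Measurable (uncurry F))
    (hM : ∀ x y, |F x y| ≤ M) {a b : ℝ} (hab : a ≤ b) (c d : ℝ) :
    IntervalIntegrable (fun y => ∫ t in a..b, F t y) volume c d := by
  refine Measurable.intervalIntegrable_of_abs_le ?_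
    (fun y => abs_intervalIntegral_le_of_abs_le (fun t => hM t y) hab) c d
  simp only [intervalIntegral.integral_of_le hab]
  exact (hF.stronglyMeasurable.integral_prod_left' (μ := volume.restrict (Ioc a b))).measurable

theorem intervalIntegrable_intervalIntegral_right (hF : Measurable (uncurry F))
    (hM : ∀ x y, |F x y| ≤ M) {a b : ℝ} (hab : a ≤ b) (c d : ℝ) :
    IntervalIntegrable (fun x => ∫ t in a..b, F x t) volume c d := by
  refine Measurable.intervalIntegrable_of_abs_le ?_
    (fun x => abs_intervalIntegral_le_of_abs_le (hM x) hab) c d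
  simp only [intervalIntegral.integral_of_le hab]
  exact (hF.stronglyMeasurable.integral_prod_right' (ν := volume.restrict (Ioc a b))).measurable

theorem intervalIntegral_integral_swap (hF : Measurable (uncurry F)) (hM : ∀ x y, |F x y| ≤ M)
    {a b c d : ℝ} (hab : a ≤ b) (hcd : c ≤ d) :
    ∫ x in a..b, ∫ y in c..d, F x y = ∫ y in c..d, ∫ x in a..b, F x y := by
  simp only [intervalIntegral.integral_of_le hab, intervalIntegral.integral_of_le hcd]
  refine integral_integral_swap (Integrable.of_bound hF.aestronglyMeasurable M
    (ae_of_all _ fun z => ?_))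
  exact hM z.1 z.2

theorem abs_sq_le_sq_of_abs_le (hM : ∀ x y, |F x y| ≤ M) (x y : ℝ) : |F x y ^ 2| ≤ M ^ 2 := by
  rw [abs_pow]
  exact pow_le_pow_left₀ (abs_nonneg _) (hM x y) 2

theorem sq_intervalIntegral_left_le (hF : Measurable (uncurry F)) (hM : ∀ x y, |F x y| ≤ M)
    {x : ℝ} (hx : x ∈ Icc (0 : ℝ) 1) (y : ℝ) :
    (∫ t in (0 : ℝ)..x, F t y) ^ 2 ≤ x * ∫ t in (0 : ℝ)..1, F t y ^ 2 := by
  have hF2 : Measurable (uncurry fun x y => F x y ^ 2) := hF.pow_const 2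
  simpa using sq_intervalIntegral_le hx.1 hx.2
    ((hF.comp measurable_prodMk_right).intervalIntegrable_of_abs_le (hM · y) 0 1)
    ((hF2.comp measurable_prodMk_right).intervalIntegrable_of_abs_le
      (abs_sq_le_sq_of_abs_le hM · y) 0 1)

theorem sq_intervalIntegral_right_le (hF : Measurable (uncurry F)) (hM : ∀ x y, |F x y| ≤ M)
    (x : ℝ) {y : ℝ} (hy : y ∈ Icc (0 : ℝ) 1) :
    (∫ t in (0 : ℝ)..y, F x t) ^ 2 ≤ y * ∫ t in (0 : ℝ)..1, F x t ^ 2 := by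
  have hF2 : Measurable (uncurry fun x y => F x y ^ 2) := hF.pow_const 2
  simpa using sq_intervalIntegral_le hy.1 hy.2
    ((hF.comp measurable_prodMk_left).intervalIntegrable_of_abs_le (hM x) 0 1)
    ((hF2.comp measurable_prodMk_left).intervalIntegrable_of_abs_le
      (abs_sq_le_sq_of_abs_le hM x) 0 1)

end BoundedMeasurable

section Primitives

variable {W₁ W₂ : ℝ → ℝ → ℝ} {M₁ M₂ : ℝ}

theorem integral_sq_primitives_le (h₁ : Measurable (uncurry W₁)) (h₂ : Measurable (uncurry W₂))
    (hM₁ : ∀ x y, |W₁ x y| ≤ M₁) (hM₂ : ∀ x y, |W₂ x y| ≤ M₂) {x : ℝ} (hx : x ∈ Icc (0 : ℝ) 1) :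
    ∫ y in (0 : ℝ)..1, ((∫ t in (0 : ℝ)..x, W₁ t y) ^ 2 + (∫ t in (0 : ℝ)..y, W₂ x t) ^ 2)
      ≤ x * (∫ y in (0 : ℝ)..1, ∫ t in (0 : ℝ)..1, W₁ t y ^ 2)
          + (∫ t in (0 : ℝ)..1, W₂ x t ^ 2) / 2 := by
  set L₁ := fun y => ∫ t in (0 : ℝ)..1, W₁ t y ^ 2
  set c₂ := ∫ t in (0 : ℝ)..1, W₂ x t ^ 2
  have hL₁ : IntervalIntegrable L₁ volume 0 1 := intervalIntegrable_intervalIntegral_left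
    (h₁.pow_const 2) (abs_sq_le_sq_of_abs_le hM₁) zero_le_one 0 1
  have hc₂ : IntervalIntegrable (fun y => y * c₂) volume 0 1 :=
    (continuous_mul_const c₂).intervalIntegrable 0 1
  calc _ ≤ ∫ y in (0 : ℝ)..1, (x * L₁ y + y * c₂) :=
        intervalIntegral_mono_of_nonneg zero_le_one (fun _ _ => by positivity)
          ((hL₁.const_mul x).add hc₂)
          (fun y hy => add_le_add (sq_intervalIntegral_left_le h₁ hM₁ hx y)
            (sq_intervalIntegral_right_le h₂ hM₂ x (Ioc_subset_Icc_self hy)))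
    _ = x * (∫ y in (0 : ℝ)..1, L₁ y) + c₂ / 2 := by
        rw [intervalIntegral.integral_add (hL₁.const_mul x) hc₂,
          intervalIntegral.integral_const_mul, intervalIntegral.integral_mul_const, integral_id]
        ring

theorem integral_integral_sq_primitives_le (h₁ : Measurable (uncurry W₁))
    (h₂ : Measurable (uncurry W₂)) (hM₁ : ∀ x y, |W₁ x y| ≤ M₁) (hM₂ : ∀ x y, |W₂ x y| ≤ M₂) :
    ∫ x in (0 : ℝ)..1, ∫ y in (0 : ℝ)..1,
        ((∫ t in (0 : ℝ)..x, W₁ t y) ^ 2 + (∫ t in (0 : ℝ)..y, W₂ x t) ^ 2)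
      ≤ 1 / 2 * ∫ x in (0 : ℝ)..1, ∫ y in (0 : ℝ)..1, (W₁ x y ^ 2 + W₂ x y ^ 2) := by
  have h₁' : Measurable (uncurry fun x y => W₁ x y ^ 2) := h₁.pow_const 2
  have h₂' : Measurable (uncurry fun x y => W₂ x y ^ 2) := h₂.pow_const 2
  have hM₁' := abs_sq_le_sq_of_abs_le hM₁
  have hM₂' := abs_sq_le_sq_of_abs_le hM₂
  set C₁ := ∫ y in (0 : ℝ)..1, ∫ t in (0 : ℝ)..1, W₁ t y ^ 2
  set L₂ := fun x => ∫ t in (0 : ℝ)..1, W₂ x t ^ 2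
  have hL₂ : IntervalIntegrable L₂ volume 0 1 :=
    intervalIntegrable_intervalIntegral_right h₂' hM₂' zero_le_one 0 1
  have hC₁ : IntervalIntegrable (fun x => x * C₁) volume 0 1 :=
    (continuous_mul_const C₁).intervalIntegrable 0 1
  have hsplit : ∀ x, ∫ y in (0 : ℝ)..1, (W₁ x y ^ 2 + W₂ x y ^ 2)
      = (∫ y in (0 : ℝ)..1, W₁ x y ^ 2) + L₂ x := fun x =>
    intervalIntegral.integral_add
      ((h₁'.comp measurable_prodMk_left).intervalIntegrable_of_abs_le (hM₁' x) 0 1)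
      ((h₂'.comp measurable_prodMk_left).intervalIntegrable_of_abs_le (hM₂' x) 0 1)
  calc _ ≤ ∫ x in (0 : ℝ)..1, (x * C₁ + L₂ x / 2) :=
        intervalIntegral_mono_of_nonneg zero_le_one
          (fun _ _ => intervalIntegral.integral_nonneg zero_le_one fun _ _ => by positivity)
          (hC₁.add (hL₂.div_const 2))
          (fun x hx => integral_sq_primitives_le h₁ h₂ hM₁ hM₂ (Ioc_subset_Icc_self hx))
    _ = 1 / 2 * (C₁ + ∫ x in (0 : ℝ)..1, L₂ x) := by
        rw [intervalIntegral.integral_add hC₁ (hL₂.div_const 2),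
          intervalIntegral.integral_mul_const, intervalIntegral.integral_div, integral_id]
        ring
    _ = 1 / 2 * ∫ x in (0 : ℝ)..1, ∫ y in (0 : ℝ)..1, (W₁ x y ^ 2 + W₂ x y ^ 2) := by
        simp only [hsplit, C₁, intervalIntegral.integral_add
            (intervalIntegrable_intervalIntegral_right h₁' hM₁' zero_le_one 0 1) hL₂,
          intervalIntegral_integral_swap h₁' hM₁' zero_le_one zero_le_one]

end Primitives

theorem hasDerivAt_intervalIntegral_of_continuousOn {f : ℝ → ℝ} {s : Set ℝ} {a x : ℝ}
    (hs : IsOpen s) (hx : x ∈ s) (hf : ContinuousOn f s)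
    (hint : IntervalIntegrable f volume a x) :
    HasDerivAt (fun u => ∫ t in a..u, f t) (f x) x :=
  intervalIntegral.integral_hasDerivAt_right hint (hf.stronglyMeasurableAtFilter hs x hx)
    (hf.continuousAt (hs.mem_nhds hx))

theorem floor_mul_eq_of_mem_Ix {N i : ℕ} {x : ℝ} (hx : x ∈ Ix N i) : ⌊x * N⌋₊ = i := by
  obtain ⟨hlo, hhi⟩ := hx
  rcases Nat.eq_zero_or_pos N with rfl | hN
  · simp only [Nat.cast_zero, div_zero] at hlo hhi
    linarith
  have hNR : (0 : ℝ) < N := by exact_mod_cast hN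
  rw [div_lt_iff₀ hNR] at hlo
  rw [lt_div_iff₀ hNR] at hhi
  rw [Nat.floor_eq_iff (by nlinarith)]
  exact ⟨hlo.le, hhi⟩

def meshCells (N : ℕ) : Set ℝ := ⋃ i < N, Ix N i

theorem Ix_subset_Ioo {N i : ℕ} (hi : i < N) : Ix N i ⊆ Ioo 0 1 := by
  have hN : (0 : ℝ) < N := by exact_mod_cast (Nat.zero_le i).trans_lt hi
  rintro x ⟨hlo, hhi⟩
  refine ⟨lt_of_le_of_lt (by positivity) hlo, hhi.trans_le ?_⟩
  rw [div_le_one hN]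
  exact_mod_cast hi

theorem meshCells_subset_Ioo (N : ℕ) : meshCells N ⊆ Ioo 0 1 :=
  iUnion₂_subset fun _ hi => Ix_subset_Ioo hi

theorem Ioc_diff_meshCells_subset {N : ℕ} (hN : 0 < N) :
    Ioc 0 1 \ meshCells N ⊆ range fun i : ℕ => (i : ℝ) / N := by
  rintro x ⟨⟨hx0, hx1⟩, hx⟩
  have hNR : (0 : ℝ) < N := by exact_mod_cast hN
  by_contra hxr
  have hfloor : (⌊x * N⌋₊ : ℝ) / N < x := by
    refine lt_of_le_of_ne ?_ fun h => hxr ⟨_, h⟩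
    rw [div_le_iff₀ hNR]
    exact Nat.floor_le (by positivity)
  have hlt : ⌊x * N⌋₊ < N := by
    by_contra h
    refine hxr ⟨N, ?_⟩
    have : (1 : ℝ) ≤ ⌊x * N⌋₊ / N := by
      rw [le_div_iff₀ hNR, one_mul]; exact_mod_cast not_lt.1 h
    simp only [div_self hNR.ne']
    linarith
  refine hx (mem_iUnion₂.2 ⟨_, hlt, hfloor, ?_⟩)
  rw [lt_div_iff₀ hNR]
  exact_mod_cast Nat.lt_floor_add_one (x * N)

theorem ae_restrict_Ioc_mem_meshCells {N : ℕ} (hN : 0 < N) :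
    ∀ᵐ t ∂volume.restrict (Ioc (0 : ℝ) 1), t ∈ meshCells N := by
  rw [ae_restrict_iff' measurableSet_Ioc]
  filter_upwards [((countable_range _).mono (Ioc_diff_meshCells_subset hN)).ae_notMem volume]
    with t ht htI
  by_contra h
  exact ht ⟨htI, h⟩

section Transfer

variable {N : ℕ} {f g : ℝ → ℝ}

theorem ae_eq_restrict_uIoc_of_eqOn_meshCells (hN : 0 < N) (h : EqOn f g (meshCells N))
    {x : ℝ} (hx : x ∈ Icc (0 : ℝ) 1) : f =ᵐ[volume.restrict (Ι 0 x)] g := by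
  rw [uIoc_of_le hx.1]
  exact ae_restrict_of_ae_restrict_of_subset (Ioc_subset_Ioc_right hx.2)
    ((ae_restrict_Ioc_mem_meshCells hN).mono fun _ ht => h ht)

theorem integral_integral_congr_meshCells (hN : 0 < N) {F G : ℝ → ℝ → ℝ}
    (h : ∀ x ∈ meshCells N, ∀ y ∈ meshCells N, F x y = G x y) :
    ∫ x in (0 : ℝ)..1, ∫ y in (0 : ℝ)..1, F x y = ∫ x in (0 : ℝ)..1, ∫ y in (0 : ℝ)..1, G x y :=
  intervalIntegral.integral_congr_ae_restrict <|
    ae_eq_restrict_uIoc_of_eqOn_meshCells hN (fun x hx =>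
      intervalIntegral.integral_congr_ae_restrict <|
        ae_eq_restrict_uIoc_of_eqOn_meshCells hN (h x hx) (right_mem_Icc.2 zero_le_one))
      (right_mem_Icc.2 zero_le_one)

theorem integral_integral_sq_primitives_congr_meshCells (hN : 0 < N)
    {v₁ v₂ W₁ W₂ : ℝ → ℝ → ℝ} (h₁ : ∀ x ∈ meshCells N, ∀ y ∈ meshCells N, v₁ x y = W₁ x y)
    (h₂ : ∀ x ∈ meshCells N, ∀ y ∈ meshCells N, v₂ x y = W₂ x y) :
    ∫ x in (0 : ℝ)..1, ∫ y in (0 : ℝ)..1,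
        ((∫ t in (0 : ℝ)..x, v₁ t y) ^ 2 + (∫ t in (0 : ℝ)..y, v₂ x t) ^ 2)
      = ∫ x in (0 : ℝ)..1, ∫ y in (0 : ℝ)..1,
        ((∫ t in (0 : ℝ)..x, W₁ t y) ^ 2 + (∫ t in (0 : ℝ)..y, W₂ x t) ^ 2) := by
  have hIcc : meshCells N ⊆ Icc 0 1 := (meshCells_subset_Ioo N).trans Ioo_subset_Icc_self
  refine integral_integral_congr_meshCells hN fun x hx y hy => ?_
  rw [intervalIntegral.integral_congr_ae_restrict <|
      ae_eq_restrict_uIoc_of_eqOn_meshCells hN (fun t ht => h₁ t ht y hy) (hIcc hx),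
    intervalIntegral.integral_congr_ae_restrict <|
      ae_eq_restrict_uIoc_of_eqOn_meshCells hN (fun t ht => h₂ x hx t ht) (hIcc hy)]

end Transfer

noncomputable def meshPatch (N : ℕ) (g : Fin N × Fin N → ℝ × ℝ → ℝ) (x y : ℝ) : ℝ :=
  ∑ p, (Ix N p.1 ×ˢ Ix N p.2).indicator (g p) (x, y)

section MeshPatch

variable {N : ℕ} {g : Fin N × Fin N → ℝ × ℝ → ℝ}

theorem measurable_meshPatch (hg : ∀ p, Measurable (g p)) : Measurable (uncurry (meshPatch N g)) :=
  Finset.measurable_sum _ fun p _ =>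
    (hg p).indicator (measurableSet_Ioo.prod measurableSet_Ioo)

theorem exists_abs_meshPatch_le (hg : ∀ p, Continuous (g p)) :
    ∃ M, ∀ x y, |meshPatch N g x y| ≤ M := by
  have hK : IsCompact (Icc (0 : ℝ) 1 ×ˢ Icc (0 : ℝ) 1) := isCompact_Icc.prod isCompact_Icc
  choose C hC using fun p => hK.exists_bound_of_continuousOn (hg p).continuousOn
  refine ⟨∑ p, C p, fun x y => (Finset.abs_sum_le_sum_abs _ _).trans
    (Finset.sum_le_sum fun p _ => ?_)⟩
  by_cases hz : (x, y) ∈ Ix N p.1 ×ˢ Ix N p.2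
  · rw [indicator_of_mem hz, ← Real.norm_eq_abs]
    exact hC p _ (prod_mono ((Ix_subset_Ioo p.1.2).trans Ioo_subset_Icc_self)
      ((Ix_subset_Ioo p.2.2).trans Ioo_subset_Icc_self) hz)
  · rw [indicator_of_notMem hz, abs_zero]
    exact (norm_nonneg _).trans
      (hC p (0, 0) ⟨left_mem_Icc.2 zero_le_one, left_mem_Icc.2 zero_le_one⟩)

theorem meshPatch_eq {i j : Fin N} {x y : ℝ} (hx : x ∈ Ix N i) (hy : y ∈ Ix N j) :
    meshPatch N g x y = g (i, j) (x, y) := by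
  have hmem : ∀ p : Fin N × Fin N, (x, y) ∈ Ix N p.1 ×ˢ Ix N p.2 → p = (i, j) := by
    rintro ⟨i', j'⟩ ⟨hx', hy'⟩
    ext
    · exact (floor_mul_eq_of_mem_Ix hx').symm.trans (floor_mul_eq_of_mem_Ix hx)
    · exact (floor_mul_eq_of_mem_Ix hy').symm.trans (floor_mul_eq_of_mem_Ix hy)
  rw [meshPatch, Finset.sum_eq_single_of_mem (i, j) (Finset.mem_univ _)
    fun p _ hp => indicator_of_notMem (fun h => hp (hmem p h)) _]
  exact indicator_of_mem (mem_prod.2 ⟨hx, hy⟩) _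

end MeshPatch

def PiecewiseContinuousOnMesh (N : ℕ) (f : ℝ → ℝ → ℝ) : Prop :=
  ∀ i j, i < N → j < N → ∃ g : ℝ × ℝ → ℝ, Continuous g ∧
    ∀ x ∈ Ix N i, ∀ y ∈ Ix N j, f x y = g (x, y)

namespace PiecewiseContinuousOnMesh

variable {N : ℕ} {f : ℝ → ℝ → ℝ}

theorem continuousOn_left (hf : PiecewiseContinuousOnMesh N f) {i j : ℕ} (hi : i < N)
    (hj : j < N) {y : ℝ} (hy : y ∈ Ix N j) : ContinuousOn (fun x => f x y) (Ix N i) := by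
  obtain ⟨g, hg, hfg⟩ := hf i j hi hj
  exact (hg.comp (continuous_id.prodMk continuous_const)).continuousOn.congr
    fun x hx => hfg x hx y hy

theorem continuousOn_right (hf : PiecewiseContinuousOnMesh N f) {i j : ℕ} (hi : i < N)
    (hj : j < N) {x : ℝ} (hx : x ∈ Ix N i) : ContinuousOn (f x) (Ix N j) := by
  obtain ⟨g, hg, hfg⟩ := hf i j hi hj
  exact (hg.comp (continuous_const.prodMk continuous_id)).continuousOn.congr
    fun y hy => hfg x hx y hy

theorem exists_measurable_bounded_eq (hf : PiecewiseContinuousOnMesh N f) :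
    ∃ W : ℝ → ℝ → ℝ, Measurable (uncurry W) ∧ (∃ M, ∀ x y, |W x y| ≤ M) ∧
      ∀ x ∈ meshCells N, ∀ y ∈ meshCells N, f x y = W x y := by
  choose g hgc hfg using fun p : Fin N × Fin N => hf p.1 p.2 p.1.2 p.2.2
  refine ⟨meshPatch N g, measurable_meshPatch fun p => (hgc p).measurable,
    exists_abs_meshPatch_le hgc, fun x hx y hy => ?_⟩
  obtain ⟨i, hi, hxi⟩ := mem_iUnion₂.1 hx
  obtain ⟨j, hj, hyj⟩ := mem_iUnion₂.1 hy
  rw [meshPatch_eq (i := ⟨i, hi⟩) (j := ⟨j, hj⟩) hxi hyj]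
  exact hfg _ x hxi y hyj

end PiecewiseContinuousOnMesh

theorem continuous_ev2 (p : MvPolynomial (Fin 2) ℝ) :
    Continuous fun z : ℝ × ℝ => ev2 p z.1 z.2 :=
  (MvPolynomial.continuous_eval p).comp <| continuous_pi fun i => by
    fin_cases i
    exacts [continuous_fst, continuous_snd]

theorem meshVk.piecewiseContinuousOnMesh_fst {k N : ℕ} {v1 v2 : ℝ → ℝ → ℝ}
    (hv : meshVk k N v1 v2) : PiecewiseContinuousOnMesh N v1 := fun i j hi hj =>
  let ⟨q1, _, _, h⟩ := hv i j hi hj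
  ⟨_, continuous_ev2 q1, fun x hx y hy => (h x y hx hy).1⟩

theorem meshVk.piecewiseContinuousOnMesh_snd {k N : ℕ} {v1 v2 : ℝ → ℝ → ℝ}
    (hv : meshVk k N v1 v2) : PiecewiseContinuousOnMesh N v2 := fun i j hi hj =>
  let ⟨_, q2, _, h⟩ := hv i j hi hj
  ⟨_, continuous_ev2 q2, fun x hx y hy => (h x y hx hy).2⟩

theorem diagonal_tensor_construction_general (k N : ℕ) (hN : 0 < N)
    (v1 v2 : ℝ → ℝ → ℝ) (hv : meshVk k N v1 v2) :
    ∃ t11 t22 : ℝ → ℝ → ℝ,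
      (∀ x y : ℝ, t11 x y = ∫ t in (0 : ℝ)..x, v1 t y) ∧
      (∀ x y : ℝ, t22 x y = ∫ t in (0 : ℝ)..y, v2 x t) ∧
      (∀ i j : ℕ, i < N → j < N → ∀ x ∈ Ix N i, ∀ y ∈ Ix N j,
        HasDerivAt (fun t => t11 t y) (v1 x y) x ∧
        HasDerivAt (fun t => t22 x t) (v2 x y) y) ∧
      (∫ x in (0 : ℝ)..1, ∫ y in (0 : ℝ)..1, ((t11 x y) ^ 2 + (t22 x y) ^ 2)) +
          (∫ x in (0 : ℝ)..1, ∫ y in (0 : ℝ)..1, ((v1 x y) ^ 2 + (v2 x y) ^ 2)) ≤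
        (3 / 2) * ∫ x in (0 : ℝ)..1, ∫ y in (0 : ℝ)..1, ((v1 x y) ^ 2 + (v2 x y) ^ 2) := by
  obtain ⟨W₁, hW₁, ⟨M₁, hM₁⟩, hv₁⟩ := hv.piecewiseContinuousOnMesh_fst.exists_measurable_bounded_eq
  obtain ⟨W₂, hW₂, ⟨M₂, hM₂⟩, hv₂⟩ := hv.piecewiseContinuousOnMesh_snd.exists_measurable_bounded_eq
  refine ⟨fun x y => ∫ t in (0 : ℝ)..x, v1 t y, fun x y => ∫ t in (0 : ℝ)..y, v2 x t,
    fun _ _ => rfl, fun _ _ => rfl, fun i j hi hj x hx y hy => ⟨?_, ?_⟩, ?_⟩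
  · exact hasDerivAt_intervalIntegral_of_continuousOn isOpen_Ioo hx
      (hv.piecewiseContinuousOnMesh_fst.continuousOn_left hi hj hy)
      (((hW₁.comp measurable_prodMk_right).intervalIntegrable_of_abs_le (hM₁ · y) 0 x).congr_ae
        (ae_eq_restrict_uIoc_of_eqOn_meshCells hN
          (fun t ht => (hv₁ t ht y (mem_iUnion₂.2 ⟨j, hj, hy⟩)).symm)
          (Ioo_subset_Icc_self (Ix_subset_Ioo hi hx))))
  · exact hasDerivAt_intervalIntegral_of_continuousOn isOpen_Ioo hy
      (hv.piecewiseContinuousOnMesh_snd.continuousOn_right hi hj hx)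
      (((hW₂.comp measurable_prodMk_left).intervalIntegrable_of_abs_le (hM₂ x) 0 y).congr_ae
        (ae_eq_restrict_uIoc_of_eqOn_meshCells hN
          (fun t ht => (hv₂ x (mem_iUnion₂.2 ⟨i, hi, hx⟩) t ht).symm)
          (Ioo_subset_Icc_self (Ix_subset_Ioo hj hy))))
  · beta_reduce
    rw [integral_integral_sq_primitives_congr_meshCells hN hv₁ hv₂,
      integral_integral_congr_meshCells hN (F := fun x y => v1 x y ^ 2 + v2 x y ^ 2)
        (G := fun x y => W₁ x y ^ 2 + W₂ x y ^ 2)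
        (fun x hx y hy => by rw [hv₁ x hx y hy, hv₂ x hx y hy])]
    linarith [integral_integral_sq_primitives_le hW₁ hW₂ hM₁ hM₂]

/-- For every `v ∈ V_k(𝒯_h)` the diagonal tensor `τ = diag(τ₁₁, τ₂₂)` obtained by directional
integration, `τ₁₁(x,y) = ∫₀ˣ v₁(t,y) dt` and `τ₂₂(x,y) = ∫₀ʸ v₂(x,t) dt`, satisfies
`div τ = v` (elementwise) and `‖τ‖²_{H(div,Ω)} ≤ (3/2) ‖v‖²_{L²(Ω)}`. -/
theorem diagonal_tensor_construction (k N : ℕ) (hk : 1 ≤ k) (hN : 0 < N)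
    (v1 v2 : ℝ → ℝ → ℝ) (hv : meshVk k N v1 v2) :
    ∃ t11 t22 : ℝ → ℝ → ℝ,
      (∀ x y : ℝ, t11 x y = ∫ t in (0 : ℝ)..x, v1 t y) ∧
      (∀ x y : ℝ, t22 x y = ∫ t in (0 : ℝ)..y, v2 x t) ∧
      (∀ i j : ℕ, i < N → j < N → ∀ x ∈ Ix N i, ∀ y ∈ Ix N j,
        HasDerivAt (fun t => t11 t y) (v1 x y) x ∧
        HasDerivAt (fun t => t22 x t) (v2 x y) y) ∧
      (∫ x in (0 : ℝ)..1, ∫ y in (0 : ℝ)..1, ((t11 x y) ^ 2 + (t22 x y) ^ 2)) +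
          (∫ x in (0 : ℝ)..1, ∫ y in (0 : ℝ)..1, ((v1 x y) ^ 2 + (v2 x y) ^ 2)) ≤
        (3 / 2) * ∫ x in (0 : ℝ)..1, ∫ y in (0 : ℝ)..1, ((v1 x y) ^ 2 + (v2 x y) ^ 2) :=
  diagonal_tensor_construction_general k N hN v1 v2 hv
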